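/- arXiv:2405.18821 — 6 statements merged into one kernel-verified Lean document; each statement's English description precedes it below -/
import Mathlib

section
/- Let M be a left cancellative monoid and x, y ∈ M, and suppose that the set B(x,y) = {k ∈ ℤ_{>0} : brd(x,y,k) = brd(y,x,k)} is nonempty with minimum m₀. Then B(x,y) consists exactly of the positive multiples of m₀, i.e. B(x,y) = {k·m₀ : k ∈ ℤ_{>0}}. -/
/-- The alternating product `brd x y m = (xy)^⌊m/2⌋ · x^(m mod 2)`. -/
def brd {M : Type*} [Monoid M] (x y : M) (m : ℕ) : M :=
  (x * y) ^ (m / 2) * x ^ (m % 2)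

lemma brd_key {M : Type*} [Monoid M] (x y : M) (k : ℕ) :
    x * (y * x) ^ k = (x * y) ^ k * x := by
  have h : SemiconjBy x (y * x) (x * y) := by
    simp [SemiconjBy, mul_assoc]
  exact h.pow_right k

lemma brd_add_even {M : Type*} [Monoid M] (x y : M) (m n : ℕ) (hm : m % 2 = 0) :
    brd x y (m + n) = brd x y m * brd x y n := by
  have h1 : (m + n) / 2 = m / 2 + n / 2 := by omega
  have h2 : (m + n) % 2 = n % 2 := by omega
  rw [brd, brd, brd, h1, h2, hm, pow_zero, mul_one, pow_add, mul_assoc]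

lemma brd_add_odd {M : Type*} [Monoid M] (x y : M) (m n : ℕ) (hm : m % 2 = 1) :
    brd x y (m + n) = brd x y m * brd y x n := by
  rcases Nat.even_or_odd n with ⟨b, hb⟩ | ⟨b, hb⟩
  · have h1 : (m + n) / 2 = m / 2 + b := by omega
    have h2 : (m + n) % 2 = 1 := by omega
    have h3 : n / 2 = b := by omega
    have h4 : n % 2 = 0 := by omega
    rw [brd, brd, brd, h1, h2, hm, h3, h4, pow_zero, mul_one, pow_one,
      mul_assoc, brd_key, pow_add, mul_assoc]
  · have h1 : (m + n) / 2 = m / 2 + b + 1 := by omega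
    have h2 : (m + n) % 2 = 0 := by omega
    have h3 : n / 2 = b := by omega
    have h4 : n % 2 = 1 := by omega
    rw [brd, brd, brd, h1, h2, h3, h4, hm, pow_zero, mul_one, pow_one, pow_one]
    rw [mul_assoc, ← mul_assoc x, brd_key, pow_add, pow_add, pow_one]
    simp [mul_assoc]

lemma brd_mul_left {M : Type*} [Monoid M] (x y : M) (m₀ : ℕ)
    (hC : brd x y m₀ = brd y x m₀) (k : ℕ) :
    brd x y (k * m₀) = brd y x (k * m₀) := by
  induction k with
  | zero => simp [brd]
  | succ k ih =>
    have hk : (k + 1) * m₀ = k * m₀ + m₀ := by ring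
    rw [hk]
    rcases Nat.mod_two_eq_zero_or_one (k * m₀) with h | h
    · rw [brd_add_even x y _ _ h, brd_add_even y x _ _ h, ih, hC]
    · rw [brd_add_odd x y _ _ h, brd_add_odd y x _ _ h, ih, hC]

theorem stmt_1 {M : Type*} [Monoid M]
    (hcancel : ∀ a b c : M, a * b = a * c → b = c)
    (x y : M) (m₀ : ℕ) (hm₀pos : 0 < m₀)
    (hm₀mem : brd x y m₀ = brd y x m₀)
    (hm₀min : ∀ k : ℕ, 0 < k → brd x y k = brd y x k → m₀ ≤ k) :
    {k : ℕ | 0 < k ∧ brd x y k = brd y x k} =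
      {n : ℕ | ∃ k : ℕ, 0 < k ∧ n = k * m₀} := by
  ext n
  simp only [Set.mem_setOf_eq]
  constructor
  · rintro ⟨hn, hC⟩
    set q := n / m₀ with hq
    set r := n % m₀ with hr
    have hnqr : n = q * m₀ + r := by rw [hq, hr, Nat.mul_comm]; exact (Nat.div_add_mod n m₀).symm
    have hrlt : r < m₀ := Nat.mod_lt n hm₀pos
    have hr0 : r = 0 := by
      by_contra hr0
      have hrpos : 0 < r := Nat.pos_of_ne_zero hr0
      have hCq := brd_mul_left x y m₀ hm₀mem q
      have hCr : brd x y r = brd y x r := by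
        rcases Nat.mod_two_eq_zero_or_one (q * m₀) with h | h
        · rw [hnqr, brd_add_even x y _ _ h, brd_add_even y x _ _ h, hCq] at hC
          exact hcancel _ _ _ hC
        · rw [hnqr, brd_add_odd x y _ _ h, brd_add_odd y x _ _ h, hCq] at hC
          exact (hcancel _ _ _ hC).symm
      exact absurd (hm₀min r hrpos hCr) (by omega)
    refine ⟨q, ?_, by omega⟩
    rcases Nat.eq_zero_or_pos q with h | h
    · rw [h] at hnqr; omega
    · exact h
  · rintro ⟨k, hk, rfl⟩
    exact ⟨by positivity, brd_mul_left x y m₀ hm₀mem k⟩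
end

section
/- Let M be a monoid with elements t₀, t₁, τ, S satisfying t_i·S = S·t_{1−i} and t_i·τ = τ·t_i for i ∈ {0,1}. Then for every positive integer m: (t₁τS)^m = brd(t₁,t₀,m)·(τS)^m and (S t₁ τ)^m = brd(t₀,t₁,m)·(Sτ)^m. -/
lemma brd_aux {M : Type*} [Monoid M] (a x y : M) (hx : a * x = y * a) (hy : a * y = x * a) :
    ∀ m : ℕ, (x * a) ^ m = brd x y m * a ^ m := by
  have cx : Commute (a * a) x := by
    show a * a * x = x * (a * a)
    rw [mul_assoc, hx, ← mul_assoc, hy, mul_assoc]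
  have cy : Commute (a * a) y := by
    show a * a * y = y * (a * a)
    rw [mul_assoc, hy, ← mul_assoc, hx, mul_assoc]
  have sq : (x * a) ^ 2 = (x * y) * (a * a) := by
    rw [pow_two, mul_assoc, ← mul_assoc a x, hx, ← mul_assoc, ← mul_assoc, mul_assoc (x*y)]
  have ha : ∀ k : ℕ, a ^ (2 * k) = (a * a) ^ k := by
    intro k; rw [pow_mul, pow_two]
  have even_case : ∀ k : ℕ, (x * a) ^ (2 * k) = (x * y) ^ k * a ^ (2 * k) := by
    intro k
    rw [pow_mul, sq, (cx.mul_right cy).symm.mul_pow, ha]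
  intro m
  rcases Nat.even_or_odd m with ⟨k, hk⟩ | ⟨k, hk⟩
  · subst hk
    rw [← two_mul, even_case, brd]
    simp [Nat.mul_div_cancel_left, Nat.mul_mod_right]
  · subst hk
    rw [pow_succ, even_case, brd]
    have h1 : (2 * k + 1) / 2 = k := by omega
    have h2 : (2 * k + 1) % 2 = 1 := by omega
    have ca : Commute (a ^ (2 * k)) x := by rw [ha]; exact cx.pow_left k
    rw [h1, h2, pow_one, mul_assoc, mul_assoc, ← mul_assoc ((a:M) ^ (2*k)), ca.eq,
      mul_assoc, ← pow_succ]

theorem stmt_3 {M : Type*} [Monoid M] (t₀ t₁ τ S : M)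
    (h0 : t₀ * S = S * t₁) (h1 : t₁ * S = S * t₀)
    (hτ0 : t₀ * τ = τ * t₀) (hτ1 : t₁ * τ = τ * t₁) :
    ∀ m : ℕ, 0 < m →
      (t₁ * τ * S) ^ m = brd t₁ t₀ m * (τ * S) ^ m ∧
      (S * t₁ * τ) ^ m = brd t₀ t₁ m * (S * τ) ^ m := by
  intro m _
  constructor
  · have := brd_aux (τ * S) t₁ t₀
      (by rw [mul_assoc, ← h0, ← mul_assoc τ t₀ S, ← hτ0, mul_assoc])
      (by rw [mul_assoc, ← h1, ← mul_assoc τ t₁ S, ← hτ1, mul_assoc]) m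
    rwa [← mul_assoc] at this
  · have := brd_aux (S * τ) t₀ t₁
      (by rw [mul_assoc, ← hτ0, ← mul_assoc S t₀ τ, ← h1, mul_assoc])
      (by rw [mul_assoc, ← hτ1, ← mul_assoc S t₁ τ, ← h0, mul_assoc]) m
    rwa [← mul_assoc, h0] at this
end

section
/- Let M be a monoid with elements t₀, t₁, τ, S satisfying t_i·S = S·t_{1−i} and t_i·τ = τ·t_i for i ∈ {0,1}, and suppose (τS)^{m₁} = (Sτ)^{m₁} and brd(t₀,t₁,m₂) = brd(t₁,t₀,m₂) for positive integers m₁, m₂. Then, with m = lcm(m₁,m₂), one has (t₁τS)^m = (S t₁ τ)^m; equivalently, brd(t₁τ, S, 2m) = brd(S, t₁τ, 2m). -/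
private lemma shift_pow {M : Type*} [Monoid M] (a b : M) (n : ℕ) :
    a * (b * a) ^ n = (a * b) ^ n * a := by
  induction n with
  | zero => simp
  | succ n ih =>
      rw [pow_succ', ← mul_assoc, ← mul_assoc, mul_assoc, ih, ← mul_assoc, ← pow_succ']

private lemma brd_even' {M : Type*} [Monoid M] (x y : M) (q : ℕ) :
    brd x y (2 * q) = (x * y) ^ q := by
  simp [brd, Nat.mul_div_cancel_left, Nat.mul_mod_right]

private lemma brd_odd' {M : Type*} [Monoid M] (x y : M) (q : ℕ) :
    brd x y (2 * q + 1) = (x * y) ^ q * x := by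
  have h1 : (2 * q + 1) / 2 = q := by omega
  have h2 : (2 * q + 1) % 2 = 1 := by omega
  simp [brd, h1, h2]

private lemma brd_dvd {M : Type*} [Monoid M] {x y : M} {n : ℕ}
    (h : brd x y n = brd y x n) {m : ℕ} (hd : n ∣ m) :
    brd x y m = brd y x m := by
  obtain ⟨k, rfl⟩ := hd
  rcases Nat.even_or_odd n with hn | hn
  · obtain ⟨q, rfl⟩ := hn
    have hq : q + q = 2 * q := by ring
    rw [hq] at h ⊢
    rw [brd_even', brd_even'] at h
    have hm : 2 * q * k = 2 * (q * k) := by ring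
    rw [hm, brd_even', brd_even', pow_mul, pow_mul, h]
  · obtain ⟨q, rfl⟩ := hn
    rw [brd_odd', brd_odd'] at h
    have key : (x * y) ^ (2 * q + 1) = (y * x) ^ (2 * q + 1) := by
      have e1 : ((x * y) ^ q * x) * ((y * x) ^ q * y) = (x * y) ^ (2 * q + 1) := by
        rw [mul_assoc, ← mul_assoc x, shift_pow,
          show 2 * q + 1 = q + (q + 1) by omega, pow_add, pow_succ]
        simp [mul_assoc]
      have e2 : ((y * x) ^ q * y) * ((x * y) ^ q * x) = (y * x) ^ (2 * q + 1) := by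
        rw [mul_assoc, ← mul_assoc y, shift_pow,
          show 2 * q + 1 = q + (q + 1) by omega, pow_add, pow_succ]
        simp [mul_assoc]
      rw [← e1, ← e2, h]
    rcases Nat.even_or_odd k with hk | hk
    · obtain ⟨j, rfl⟩ := hk
      have hm : (2 * q + 1) * (j + j) = 2 * ((2 * q + 1) * j) := by ring
      rw [hm, brd_even', brd_even', pow_mul, pow_mul, key]
    · obtain ⟨j, rfl⟩ := hk
      have hm : (2 * q + 1) * (2 * j + 1) = 2 * ((2 * q + 1) * j + q) + 1 := by ring
      rw [hm, brd_odd', brd_odd', pow_add, pow_add, pow_mul, pow_mul, key,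
        mul_assoc, mul_assoc, h]

theorem stmt_4 {M : Type*} [Monoid M] (t₀ t₁ τ S : M)
    (h0 : t₀ * S = S * t₁) (h1 : t₁ * S = S * t₀)
    (hτ0 : t₀ * τ = τ * t₀) (hτ1 : t₁ * τ = τ * t₁)
    (m₁ m₂ : ℕ) (hm₁ : 0 < m₁) (hm₂ : 0 < m₂)
    (hτS : (τ * S) ^ m₁ = (S * τ) ^ m₁)
    (hbrd : brd t₀ t₁ m₂ = brd t₁ t₀ m₂) :
    (t₁ * τ * S) ^ (Nat.lcm m₁ m₂) = (S * t₁ * τ) ^ (Nat.lcm m₁ m₂) ∧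
    brd (t₁ * τ) S (2 * Nat.lcm m₁ m₂) = brd S (t₁ * τ) (2 * Nat.lcm m₁ m₂) := by
  set t : ℕ → M := fun i => if i % 2 = 0 then t₀ else t₁ with ht
  have ht0 : ∀ i, i % 2 = 0 → t i = t₀ := fun i hi => by simp [ht, hi]
  have ht1 : ∀ i, i % 2 = 1 → t i = t₁ := fun i hi => by simp [ht, hi]
  have htS : ∀ i, t i * S = S * t (i + 1) := by
    intro i
    rcases Nat.mod_two_eq_zero_or_one i with hi | hi
    · rw [ht0 i hi, ht1 (i+1) (by omega), h0]
    · rw [ht1 i hi, ht0 (i+1) (by omega), h1]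
  have htτ : ∀ i, t i * τ = τ * t i := by
    intro i
    rcases Nat.mod_two_eq_zero_or_one i with hi | hi
    · rw [ht0 i hi, hτ0]
    · rw [ht1 i hi, hτ1]
  have hstep1 : ∀ i, t i * (τ * S) = (τ * S) * t (i + 1) := by
    intro i; rw [← mul_assoc, htτ, mul_assoc, htS, ← mul_assoc]
  have hstep2 : ∀ i, t i * (S * τ) = (S * τ) * t (i + 1) := by
    intro i; rw [← mul_assoc, htS, mul_assoc, htτ, ← mul_assoc]
  have hpow1 : ∀ i k, t i * (τ * S) ^ k = (τ * S) ^ k * t (i + k) := by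
    intro i k
    induction k generalizing i with
    | zero => simp
    | succ k ih =>
        rw [pow_succ', ← mul_assoc, hstep1, mul_assoc, ih, ← mul_assoc, ← pow_succ']
        congr 2
        omega
  have hpow2 : ∀ i k, t i * (S * τ) ^ k = (S * τ) ^ k * t (i + k) := by
    intro i k
    induction k generalizing i with
    | zero => simp
    | succ k ih =>
        rw [pow_succ', ← mul_assoc, hstep2, mul_assoc, ih, ← mul_assoc, ← pow_succ']
        congr 2
        omega
  set a : ℕ → M := fun k => if k % 2 = 0 then brd t₁ t₀ k else brd t₀ t₁ k with ha
  set b : ℕ → M := fun k => if k % 2 = 0 then brd t₀ t₁ k else brd t₁ t₀ k with hb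
  have haeven : ∀ q, a (2 * q) = brd t₁ t₀ (2 * q) := by
    intro q; simp [ha, Nat.mul_mod_right]
  have haodd : ∀ q, a (2 * q + 1) = brd t₀ t₁ (2 * q + 1) := by
    intro q; simp [ha, Nat.mul_add_mod]
  have hbeven : ∀ q, b (2 * q) = brd t₀ t₁ (2 * q) := by
    intro q; simp [hb, Nat.mul_mod_right]
  have hbodd : ∀ q, b (2 * q + 1) = brd t₁ t₀ (2 * q + 1) := by
    intro q; simp [hb, Nat.mul_add_mod]
  have hastep : ∀ k, t k * a k = a (k + 1) := by
    intro k
    rcases Nat.even_or_odd k with hk | hk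
    · obtain ⟨q, rfl⟩ := hk
      rw [show q + q = 2 * q by ring]
      rw [haeven, haodd, ht0 _ (by omega), brd_even', brd_odd', shift_pow]
    · obtain ⟨q, rfl⟩ := hk
      rw [haodd, show 2 * q + 1 + 1 = 2 * (q + 1) by ring, haeven,
        ht1 _ (by omega), brd_odd', brd_even', ← mul_assoc, shift_pow,
        pow_succ, mul_assoc]
  have hbstep : ∀ k, t (k + 1) * b k = b (k + 1) := by
    intro k
    rcases Nat.even_or_odd k with hk | hk
    · obtain ⟨q, rfl⟩ := hk
      rw [show q + q = 2 * q by ring]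
      rw [hbeven, hbodd, ht1 _ (by omega), brd_even', brd_odd', shift_pow]
    · obtain ⟨q, rfl⟩ := hk
      rw [hbodd, show 2 * q + 1 + 1 = 2 * (q + 1) by ring, hbeven,
        ht0 _ (by omega), brd_odd', brd_even', ← mul_assoc, shift_pow,
        pow_succ, mul_assoc]
  have e1 : t₁ * τ * S = (τ * S) * t 0 := by
    rw [ht0 0 rfl, hτ1, mul_assoc, h1, ← mul_assoc]
  have e2 : S * t₁ * τ = (S * τ) * t 1 := by
    rw [ht1 1 rfl, mul_assoc, hτ1, ← mul_assoc]
  have hA : ∀ k, (t₁ * τ * S) ^ k = (τ * S) ^ k * a k := by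
    intro k
    induction k with
    | zero => simp [ha, brd]
    | succ k ih =>
        rw [pow_succ', ih, e1, mul_assoc, ← mul_assoc (t 0), hpow1, Nat.zero_add,
          mul_assoc ((τ * S) ^ k), hastep, ← mul_assoc, ← pow_succ']
  have hB : ∀ k, (S * t₁ * τ) ^ k = (S * τ) ^ k * b k := by
    intro k
    induction k with
    | zero => simp [hb, brd]
    | succ k ih =>
        rw [pow_succ', ih, e2, mul_assoc, ← mul_assoc (t 1), hpow2,
          show (1 : ℕ) + k = k + 1 by omega,
          mul_assoc ((S * τ) ^ k), hbstep, ← mul_assoc, ← pow_succ']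
  set m := Nat.lcm m₁ m₂ with hm
  obtain ⟨k₁, hk₁⟩ : m₁ ∣ m := Nat.dvd_lcm_left m₁ m₂
  have hd2 : m₂ ∣ m := Nat.dvd_lcm_right m₁ m₂
  have hτSm : (τ * S) ^ m = (S * τ) ^ m := by
    rw [hk₁, pow_mul, pow_mul, hτS]
  have hbrdm : brd t₀ t₁ m = brd t₁ t₀ m := brd_dvd hbrd hd2
  have hab : a m = b m := by
    rcases Nat.even_or_odd m with hmm | hmm
    · obtain ⟨q, hq⟩ := hmm
      have h2q : m = 2 * q := by omega
      rw [h2q] at hbrdm ⊢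
      rw [haeven, hbeven]
      exact hbrdm.symm
    · obtain ⟨q, hq⟩ := hmm
      rw [hq] at hbrdm ⊢
      rw [haodd, hbodd]
      exact hbrdm
  have main : (t₁ * τ * S) ^ m = (S * t₁ * τ) ^ m := by
    rw [hA, hB, hτSm, hab]
  refine ⟨main, ?_⟩
  rw [brd_even', brd_even']
  calc (t₁ * τ * S) ^ m = (S * t₁ * τ) ^ m := main
    _ = (S * (t₁ * τ)) ^ m := by rw [mul_assoc]
end

section
/- For r ≥ 0, call two subsets J, K of {1,…,r} weakly orthogonal if every element of J∖K has distance at least 2 from every element of K, and every element of K∖J has distance at least 2 from every element of J (distance of i and j meaning |i−j|; 'at least 2' encodes orthogonality of the corresponding nodes of the A_r Coxeter graph). Let W_r be the set of ordered pairs (J,K) of weakly orthogonal subsets of {1,…,r}. Then |W_r| = w_r, where w₀ = 1, w₁ = 4, and w_{r+1} = 2·(w_r + w_{r−1}). -/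
/-- Two subsets `J`, `K` of the vertex set `{1,…,r}` of the Coxeter graph of type `A_r`
(represented by `Fin r`) are weakly orthogonal if every element of `J \ K` has distance
at least 2 from every element of `K`, and every element of `K \ J` has distance at
least 2 from every element of `J`. -/
def WeaklyOrthogonal {r : ℕ} (J K : Finset (Fin r)) : Prop :=
  (∀ i ∈ J \ K, ∀ j ∈ K, 2 ≤ Nat.dist (i : ℕ) (j : ℕ)) ∧
  (∀ i ∈ K \ J, ∀ j ∈ J, 2 ≤ Nat.dist (i : ℕ) (j : ℕ))

abbrev St := Bool × Bool

def R (a b : St) : Prop := a = b ∨ a = (false, false) ∨ b = (false, false)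

instance (a b : St) : Decidable (R a b) := by unfold R; infer_instance

def P (n : ℕ) (f : Fin n → St) : Prop :=
  ∀ i : Fin n, ∀ h : (i : ℕ) + 1 < n, R (f i) (f ⟨(i : ℕ) + 1, h⟩)

instance (n : ℕ) : DecidablePred (P n) := fun _ => by unfold P; infer_instance

def hc (n : ℕ) (x : St) (f : Fin n → St) : Prop := ∀ h : 0 < n, R x (f ⟨0, h⟩)

instance (n : ℕ) (x : St) : DecidablePred (hc n x) := fun _ => by unfold hc; infer_instance

def a (n : ℕ) : ℕ := Fintype.card {f : Fin n → St // P n f}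

def d (n : ℕ) (x : St) : ℕ := Fintype.card {f : Fin n → St // P n f ∧ hc n x f}

def consSplit (n : ℕ) (Q : (Fin (n + 1) → St) → Prop) :
    {f : Fin (n + 1) → St // Q f} ≃ Σ y : St, {g : Fin n → St // Q (Fin.cons y g)} where
  toFun f := ⟨f.1 0, Fin.tail f.1, by rw [Fin.cons_self_tail]; exact f.2⟩
  invFun p := ⟨Fin.cons p.1 p.2.1, p.2.2⟩
  left_inv f := by
    apply Subtype.ext
    exact Fin.cons_self_tail f.1
  right_inv p := by
    obtain ⟨y, g, h⟩ := p
    simp only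
    congr 1

lemma cons_mk_succ {n : ℕ} (y : St) (g : Fin n → St) (k : ℕ) (h : k + 1 < n + 1) :
    (Fin.cons y g : Fin (n + 1) → St) ⟨k + 1, h⟩ = g ⟨k, by omega⟩ := by
  have e : (⟨k + 1, h⟩ : Fin (n + 1)) = Fin.succ ⟨k, by omega⟩ := rfl
  rw [e, Fin.cons_succ]

lemma cons_mk_zero {n : ℕ} (y : St) (g : Fin n → St) (h : 0 < n + 1) :
    (Fin.cons y g : Fin (n + 1) → St) ⟨0, h⟩ = y := rfl

lemma P_cons (n : ℕ) (y : St) (g : Fin n → St) :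
    P (n + 1) (Fin.cons y g) ↔ P n g ∧ hc n y g := by
  constructor
  · intro H
    refine ⟨fun i h => ?_, fun h => ?_⟩
    · have := H ⟨(i : ℕ) + 1, by omega⟩ (by simpa using by omega)
      simpa [cons_mk_succ] using this
    · have := H ⟨0, by omega⟩ (by simpa using by omega)
      simpa [cons_mk_zero, cons_mk_succ] using this
  · rintro ⟨h1, h2⟩ i hlt
    rcases i with ⟨iv, hiv⟩
    rcases iv with _ | k
    · have := h2 (by omega)
      simpa [cons_mk_zero, cons_mk_succ] using this
    · have hk : k + 1 < n := by simpa using hlt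
      have := h1 ⟨k, by omega⟩ (by simpa using hk)
      simpa [cons_mk_succ] using this

lemma card_split (n : ℕ) (Q : (Fin (n + 1) → St) → Prop) [DecidablePred Q] :
    Fintype.card {f : Fin (n + 1) → St // Q f}
      = ∑ y : St, Fintype.card {g : Fin n → St // Q (Fin.cons y g)} := by
  rw [Fintype.card_congr (consSplit n Q), Fintype.card_sigma]

lemma fiber_card (n : ℕ) (x y : St) :
    Fintype.card {g : Fin n → St //
        P (n + 1) (Fin.cons y g) ∧ hc (n + 1) x (Fin.cons y g)}
      = if R x y then d n y else 0 := by
  have hhc : ∀ g : Fin n → St, hc (n + 1) x (Fin.cons y g) ↔ R x y := by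
    intro g
    unfold hc
    simp [cons_mk_zero]
  split
  · rename_i hR
    rw [d]
    apply Fintype.card_congr
    apply Equiv.subtypeEquivRight
    intro g
    rw [P_cons, hhc]
    tauto
  · rename_i hR
    rw [Fintype.card_eq_zero_iff]
    exact ⟨fun ⟨g, _, h2⟩ => hR ((hhc g).1 h2)⟩

lemma a_succ (n : ℕ) : a (n + 1) = ∑ y : St, d n y := by
  rw [a, card_split]
  apply Finset.sum_congr rfl
  intro y _
  rw [d]
  exact Fintype.card_congr (Equiv.subtypeEquivRight fun g => P_cons n y g)

lemma d_N (n : ℕ) : d n (false, false) = a n := by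
  rw [d, a]
  apply Fintype.card_congr
  apply Equiv.subtypeEquivRight
  intro g
  exact and_iff_left fun h => Or.inr (Or.inl rfl)

lemma d_succ (n : ℕ) (x : St) :
    d (n + 1) x = ∑ y : St, if R x y then d n y else 0 := by
  rw [d, card_split]
  exact Finset.sum_congr rfl fun y _ => fiber_card n x y

lemma sum_St (F : St → ℕ) :
    ∑ y : St, F y = F (false, false) + F (false, true) + F (true, false) + F (true, true) := by
  simp [Fintype.sum_prod_type, Fintype.sum_bool]
  try omega

lemma a_zero : a 0 = 1 := by
  rw [a]
  rw [Fintype.card_congr (Equiv.subtypeUnivEquiv fun f => by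
    intro i h
    exact absurd h (by omega))]
  simp

lemma d_zero (x : St) : d 0 x = 1 := by
  rw [d]
  rw [Fintype.card_congr (Equiv.subtypeUnivEquiv fun f =>
    ⟨fun i h => absurd h (by omega), fun h => absurd h (by omega)⟩)]
  simp

lemma a_one : a 1 = 4 := by
  have := a_succ 0
  rw [sum_St] at this
  simp [d_zero] at this
  omega

lemma d_succ' (n : ℕ) (x : St) (hx : x ≠ (false, false)) :
    d (n + 1) x = a n + d n x := by
  rw [d_succ, sum_St]
  rcases x with ⟨x1, x2⟩
  rcases x1 <;> rcases x2 <;> simp_all [R, d_N] <;> omega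

lemma a_succ' (n : ℕ) :
    a (n + 1) = a n + (d n (false, true) + d n (true, false) + d n (true, true)) := by
  rw [a_succ, sum_St, d_N]
  omega

lemma a_rec (n : ℕ) : a (n + 2) = 2 * (a (n + 1) + a n) := by
  have h1 : a (n + 2) = a (n + 1) +
      (d (n + 1) (false, true) + d (n + 1) (true, false) + d (n + 1) (true, true)) :=
    a_succ' (n + 1)
  have h2 := a_succ' n
  have e1 := d_succ' n (false, true) (by simp)
  have e2 := d_succ' n (true, false) (by simp)
  have e3 := d_succ' n (true, true) (by simp)
  omega

lemma WO_iff {r : ℕ} (J K : Finset (Fin r)) :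
    WeaklyOrthogonal J K ↔ P r (fun i => (decide (i ∈ J), decide (i ∈ K))) := by
  constructor
  · rintro ⟨W1, W2⟩ i h
    simp only [Finset.mem_sdiff] at W1 W2
    set j : Fin r := ⟨(i : ℕ) + 1, h⟩ with hjdef
    have hji : (j : ℕ) = (i : ℕ) + 1 := rfl
    have F1 : ¬ 2 ≤ Nat.dist (i : ℕ) (j : ℕ) := by
      rw [hji]; simp [Nat.dist]
    have F2 : ¬ 2 ≤ Nat.dist (j : ℕ) (i : ℕ) := by
      rw [hji]; simp [Nat.dist]
    by_cases h1 : i ∈ J <;> by_cases h2 : i ∈ K <;> by_cases h3 : j ∈ J <;>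
      by_cases h4 : j ∈ K <;>
      (try simp [R, h1, h2, h3, h4, Prod.ext_iff]) <;>
      first
        | tauto
        | exact absurd (W1 i ⟨h1, h2⟩ j h4) F1
        | exact absurd (W2 i ⟨h2, h1⟩ j h3) F1
        | exact absurd (W1 j ⟨h3, h4⟩ i h2) F2
        | exact absurd (W2 j ⟨h4, h3⟩ i h1) F2
  · intro hP
    constructor <;> intro i hi j hj <;> rw [Finset.mem_sdiff] at hi <;> by_contra hlt <;>
        [skip; skip] <;>
      (have hne : (i : ℕ) ≠ (j : ℕ) := fun e => hi.2 ((Fin.ext e).symm ▸ hj)) <;>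
      (have hd : (i : ℕ) = (j : ℕ) + 1 ∨ (j : ℕ) = (i : ℕ) + 1 := by
        simp [Nat.dist] at hlt; omega) <;>
      rcases hd with hd | hd
    · have hlt2 : (j : ℕ) + 1 < r := by have := i.isLt; omega
      have hP' := hP j hlt2
      rw [show (⟨(j : ℕ) + 1, hlt2⟩ : Fin r) = i from Fin.ext (by simp only [Fin.val_mk]; omega)] at hP'
      simp [R, Prod.ext_iff, hi.1, hi.2, hj] at hP'
    · have hlt2 : (i : ℕ) + 1 < r := by have := j.isLt; omega
      have hP' := hP i hlt2
      rw [show (⟨(i : ℕ) + 1, hlt2⟩ : Fin r) = j from Fin.ext (by simp only [Fin.val_mk]; omega)] at hP'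
      simp [R, Prod.ext_iff, hi.1, hi.2, hj] at hP'
    · have hlt2 : (j : ℕ) + 1 < r := by have := i.isLt; omega
      have hP' := hP j hlt2
      rw [show (⟨(j : ℕ) + 1, hlt2⟩ : Fin r) = i from Fin.ext (by simp only [Fin.val_mk]; omega)] at hP'
      simp [R, Prod.ext_iff, hi.1, hi.2, hj] at hP'
    · have hlt2 : (i : ℕ) + 1 < r := by have := j.isLt; omega
      have hP' := hP i hlt2
      rw [show (⟨(i : ℕ) + 1, hlt2⟩ : Fin r) = j from Fin.ext (by simp only [Fin.val_mk]; omega)] at hP'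
      simp [R, Prod.ext_iff, hi.1, hi.2, hj] at hP'

def baseEquiv (r : ℕ) : (Finset (Fin r) × Finset (Fin r)) ≃ (Fin r → St) where
  toFun p := fun i => (decide (i ∈ p.1), decide (i ∈ p.2))
  invFun f := (Finset.univ.filter fun i => (f i).1 = true,
    Finset.univ.filter fun i => (f i).2 = true)
  left_inv p := by
    ext i <;> simp
  right_inv f := by
    funext i
    ext <;> simp

lemma card_eq (r : ℕ) :
    Nat.card {p : Finset (Fin r) × Finset (Fin r) // WeaklyOrthogonal p.1 p.2} = a r := by
  rw [Nat.card_congr ((baseEquiv r).subtypeEquiv fun p => WO_iff p.1 p.2)]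
  rw [Nat.card_eq_fintype_card]
  rfl

theorem stmt_12 (w : ℕ → ℕ) (h0 : w 0 = 1) (h1 : w 1 = 4)
    (hrec : ∀ r : ℕ, 1 ≤ r → w (r + 1) = 2 * (w r + w (r - 1))) :
    ∀ r : ℕ,
      Nat.card {p : Finset (Fin r) × Finset (Fin r) // WeaklyOrthogonal p.1 p.2} = w r := by
  have key : ∀ n, a n = w n := by
    intro n
    induction n using Nat.strong_induction_on with
    | _ n ih =>
      match n with
      | 0 => rw [a_zero, h0]
      | 1 => rw [a_one, h1]
      | (m + 2) =>
        rw [a_rec, hrec (m + 1) (by omega)]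
        simp only [Nat.add_sub_cancel]
        rw [ih (m + 1) (by omega), ih m (by omega)]
  intro r
  rw [card_eq, key]
end

section
/- Let m ≥ 1 and let j₁ < j₂ < ⋯ < j_m be elements of ℤ. In the symmetric group, set t = (∏_{r odd, 1≤r≤m−1} (j_r, j_{r+1})) · (∏_{r even, 1≤r≤m−1} (j_r, j_{r+1})), where each product is over disjoint transpositions (so well-defined). Then t is a cycle of length m on the set {j₁,…,j_m}; in particular t has order m. -/
/-!
Write `t_m` for the permutation built from `j₀ < ⋯ < j_{m-1}`. Passing from `t_m` to `t_{m+1}`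
adds the transposition `s = (j_{m-1}, j_m)` to one of the two partial products. If it joins the
second one, `t_{m+1} = t_m s`. If it joins the first one, it commutes with the second product up
to its last factor `(j_{m-2}, j_{m-1})`, and conjugating past that factor gives
`t_{m+1} = t_m (j_{m-2}, j_m)`. Either way `t_{m+1} = t_m (j_p, j_m)` with `p < m`, and
multiplying a cycle through `j_p` on the right by `(j_p, j_m)`, with `j_m` outside the cycle,
splices `j_m` into it right after `j_p`. By induction `t_m` is a single `m`-cycle on `{j₀, …, j_{m-1}}`.
-/

/-- For `j₁ < ⋯ < j_m` in `ℤ` (given as `j 0, …, j (m-1)`), the permutation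
`t = (∏_{r odd, 1≤r≤m−1} (j_r, j_{r+1})) · (∏_{r even, 1≤r≤m−1} (j_r, j_{r+1}))`:
with 0-based indexing, paper index `r` corresponds to `r - 1`, so the paper's odd
(resp. even) `r` are the even (resp. odd) residues below. Each partial product is
over pairwise disjoint transpositions, so any fixed order gives the same element. -/
def cyclePerm (m : ℕ) (j : ℕ → ℤ) : Equiv.Perm ℤ :=
  (((List.range (m - 1)).filter (fun r => r % 2 = 0)).map
      (fun r => Equiv.swap (j r) (j (r + 1)))).prod *
  (((List.range (m - 1)).filter (fun r => r % 2 = 1)).map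
      (fun r => Equiv.swap (j r) (j (r + 1)))).prod

open Equiv

section Swap

variable {α : Type*} [DecidableEq α]

theorem swap_mul_swap_eq_swap_mul_swap {a b c : α} (hab : a ≠ b) (hac : a ≠ c) (hbc : b ≠ c) :
    swap b c * swap a b = swap a b * swap a c := by
  ext x
  simp only [Perm.mul_apply, swap_apply_def]
  split_ifs <;> simp_all

theorem exists_formPerm_mul_swap {l : List α} {a b : α} (hl : l.Nodup) (ha : a ∈ l)
    (hb : b ∉ l) :
    ∃ l' : List α, l'.Nodup ∧ l'.Perm (l ++ [b]) ∧ l.formPerm * swap a b = l'.formPerm := by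
  obtain ⟨s, t, rfl⟩ := List.append_of_mem ha
  have hrot : (s ++ a :: t).IsRotated (t ++ s ++ [a]) := by
    simpa using List.isRotated_append (l := s ++ [a]) (l' := t)
  have hl' : (t ++ s ++ [a]).Nodup := hrot.nodup_iff.1 hl
  refine ⟨t ++ s ++ [a, b], ?_, ?_, ?_⟩
  · rw [← List.singleton_append, ← List.append_assoc]
    exact List.nodup_append.2 ⟨hl', List.nodup_singleton b,
      fun x hx y hy => by rintro rfl; exact hb ((hrot.perm.mem_iff).2 (by simp_all))⟩
  · rw [← List.singleton_append, ← List.append_assoc]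
    exact hrot.perm.symm.append_right [b]
  · rw [List.formPerm_eq_of_isRotated hl hrot, List.formPerm_append_pair]

end Swap

section CyclePerm

def swapProdOfParity (j : ℕ → ℤ) (c n : ℕ) : Perm ℤ :=
  (((List.range n).filter (fun r => r % 2 = c)).map (fun r => swap (j r) (j (r + 1)))).prod

theorem cyclePerm_succ (n : ℕ) (j : ℕ → ℤ) :
    cyclePerm (n + 1) j = swapProdOfParity j 0 n * swapProdOfParity j 1 n := rfl

theorem swapProdOfParity_succ_of_mod_eq {j : ℕ → ℤ} {c n : ℕ} (h : n % 2 = c) :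
    swapProdOfParity j c (n + 1) = swapProdOfParity j c n * swap (j n) (j (n + 1)) := by
  simp [swapProdOfParity, List.range_succ, h]

theorem swapProdOfParity_succ_of_mod_ne {j : ℕ → ℤ} {c n : ℕ} (h : n % 2 ≠ c) :
    swapProdOfParity j c (n + 1) = swapProdOfParity j c n := by
  simp [swapProdOfParity, List.range_succ, h]

theorem commute_swap_swapProdOfParity {j : ℕ → ℤ} {c n k : ℕ} (hnk : n < k)
    (hj : Set.InjOn j (Set.Iio (k + 2))) :
    Commute (swap (j k) (j (k + 1))) (swapProdOfParity j c n) := by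
  refine Commute.list_prod_right _ _ fun σ hσ => ?_
  obtain ⟨r, hr, rfl⟩ := List.mem_map.1 hσ
  have hr : r < n := List.mem_range.1 (List.mem_filter.1 hr).1
  refine (Perm.disjoint_swap_swap ?_).commute
  refine List.Nodup.map_on (l := [k, k + 1, r, r + 1]) (fun a ha b hb hab => ?_) ?_
  · simp only [List.mem_cons, List.not_mem_nil, or_false] at ha hb
    exact hj (by simp only [Set.mem_Iio]; omega) (by simp only [Set.mem_Iio]; omega) hab
  · simp only [List.nodup_cons, List.mem_cons, List.not_mem_nil, List.nodup_nil, or_false,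
      not_false_eq_true, and_true]
    omega

theorem exists_cyclePerm_succ_eq_mul_swap {m : ℕ} {j : ℕ → ℤ} (hm : 1 ≤ m)
    (hj : Set.InjOn j (Set.Iio (m + 1))) :
    ∃ p < m, cyclePerm (m + 1) j = cyclePerm m j * swap (j p) (j m) := by
  obtain ⟨n, rfl⟩ := Nat.exists_eq_add_of_le' hm
  rw [cyclePerm_succ, cyclePerm_succ]
  rcases Nat.mod_two_eq_zero_or_one n with hn | hn
  · rcases n with _ | q
    · exact ⟨0, one_pos, by simp [swapProdOfParity, List.range_succ]⟩
    have hq : q % 2 = 1 := by omega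
    have hj' : Set.InjOn j (Set.Iio (q + 1 + 2)) := hj.mono (Set.Iio_subset_Iio (by omega))
    have hcomm := commute_swap_swapProdOfParity (c := 1) (Nat.lt_succ_self q) hj'
    have hne : ∀ a b, a < q + 1 + 2 → b < q + 1 + 2 → a ≠ b → j a ≠ j b :=
      fun a b ha hb hab h => hab (hj' ha hb h)
    have hrot := swap_mul_swap_eq_swap_mul_swap (a := j q) (b := j (q + 1)) (c := j (q + 1 + 1))
      (hne _ _ (by omega) (by omega) (by omega)) (hne _ _ (by omega) (by omega) (by omega))
      (hne _ _ (by omega) (by omega) (by omega))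
    refine ⟨q, by omega, ?_⟩
    rw [swapProdOfParity_succ_of_mod_eq hn, swapProdOfParity_succ_of_mod_ne (c := 1) (by omega),
      swapProdOfParity_succ_of_mod_eq (c := 1) (n := q) hq, mul_assoc _ (swap _ _),
      ← mul_assoc (swap _ _), hcomm.eq, mul_assoc _ _ (swap (j q) _), hrot]
    simp only [mul_assoc]
  · refine ⟨n, by omega, ?_⟩
    rw [swapProdOfParity_succ_of_mod_ne (c := 0) (by omega), swapProdOfParity_succ_of_mod_eq hn,
      mul_assoc]

theorem exists_nodup_perm_cyclePerm_eq_formPerm {m : ℕ} (hm : 1 ≤ m) {j : ℕ → ℤ}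
    (hj : Set.InjOn j (Set.Iio m)) :
    ∃ l : List ℤ, l.Nodup ∧ l.Perm ((List.range m).map j) ∧ cyclePerm m j = l.formPerm := by
  induction m, hm using Nat.le_induction with
  | base => exact ⟨[j 0], List.nodup_singleton _, by simp, rfl⟩
  | succ m hm ih =>
    obtain ⟨l, hl, hperm, hl_eq⟩ := ih (hj.mono (Set.Iio_subset_Iio m.le_succ))
    obtain ⟨p, hp, hstep⟩ := exists_cyclePerm_succ_eq_mul_swap hm hj
    have ha : j p ∈ l := hperm.mem_iff.2 (List.mem_map_of_mem (List.mem_range.2 hp))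
    have hb : j m ∉ l := by
      rw [hperm.mem_iff, List.mem_map]
      rintro ⟨r, hr, hjr⟩
      have hr := List.mem_range.1 hr
      exact hr.ne (hj (by simp; omega) (by simp) hjr)
    obtain ⟨l', hl', hperm', heq⟩ := exists_formPerm_mul_swap hl ha hb
    refine ⟨l', hl', ?_, by rw [hstep, hl_eq, heq]⟩
    rw [List.range_succ, List.map_append]
    exact hperm'.trans (hperm.append_right _)

end CyclePerm

theorem stmt_16 (m : ℕ) (hm : 1 ≤ m) (j : ℕ → ℤ)
    (hmono : ∀ r s : ℕ, r < s → s < m → j r < j s) :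
    (cyclePerm m j).IsCycleOn (↑((Finset.range m).image j) : Set ℤ) ∧
    ((Finset.range m).image j).card = m ∧
    orderOf (cyclePerm m j) = m := by
  have hj : Set.InjOn j (Set.Iio m) := StrictMonoOn.injOn fun r _ s hs hrs => hmono r s hrs hs
  obtain ⟨l, hl, hperm, heq⟩ := exists_nodup_perm_cyclePerm_eq_formPerm hm hj
  have hset : {a | a ∈ l} = (((Finset.range m).image j : Finset ℤ) : Set ℤ) := by
    ext; simp [hperm.mem_iff]
  have hcycle : (cyclePerm m j).IsCycleOn (↑((Finset.range m).image j) : Set ℤ) :=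
    heq ▸ hset ▸ hl.isCycleOn_formPerm
  have hcard : ((Finset.range m).image j).card = m := by
    rw [Finset.card_image_of_injOn (by simpa using hj), Finset.card_range]
  refine ⟨hcycle, hcard, Nat.dvd_antisymm (orderOf_dvd_of_pow_eq_one ?_) ?_⟩
  · rw [heq, ← List.length_range (n := m), ← List.length_map (f := j), ← hperm.length_eq]
    exact List.formPerm_pow_length_eq_one_of_nodup (l := l) hl
  · have h0 : j 0 ∈ (Finset.range m).image j := Finset.mem_image_of_mem j (Finset.mem_range.2 hm)
    have := (hcycle.pow_apply_eq h0).1 (by rw [pow_orderOf_eq_one, Perm.one_apply])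
    rwa [hcard] at this
end

section
/- Let M be a monoid, t₁, t₂ ∈ M, and m a positive integer with brd(t₁,t₂,m) = brd(t₂,t₁,m). Suppose z₁, z₂ ∈ M and for each ordered pair (i,j) with {i,j} = {1,2} there are elements z_{i,j}^{(1)} = z_i, z_{i,j}^{(2)}, …, z_{i,j}^{(m)} satisfying: z_{i,j}^{(k)}·t_j = t_j·z_{i,j}^{(k+1)} when k is odd, and z_{i,j}^{(k)}·t_i = t_i·z_{i,j}^{(k+1)} when k is even (for 1 ≤ k ≤ m−1); and moreover z_{1,2}^{(m)}·z_{2,1}^{(m−1)}·z_{1,2}^{(m−2)}·⋯ = z_{2,1}^{(m)}·z_{1,2}^{(m−1)}·z_{2,1}^{(m−2)}·⋯ (each product having m factors with alternating first indices, descending superscripts). Then brd(t₁z₁, t₂z₂, m) = brd(t₂z₂, t₁z₁, m). -/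
/-- The alternating word `x y x y ⋯` with `n` factors. -/
def wrd {M : Type*} [Monoid M] (x y : M) (n : ℕ) : M :=
  ((List.range n).map fun k => if k % 2 = 0 then x else y).prod

lemma wrd_succ {M : Type*} [Monoid M] (x y : M) (n : ℕ) :
    wrd x y (n + 1) = x * wrd y x n := by
  unfold wrd
  rw [List.range_succ_eq_map, List.map_cons, List.prod_cons, List.map_map]
  simp only [if_pos rfl]
  have hf : ((fun k => if k % 2 = 0 then x else y) ∘ Nat.succ) =
      fun k => if k % 2 = 0 then y else x := by
    funext k
    simp only [Function.comp]
    rcases Nat.mod_two_eq_zero_or_one k with h | h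
    · have : (k + 1) % 2 = 1 := by omega
      simp [Nat.succ_eq_add_one, this, h]
    · have : (k + 1) % 2 = 0 := by omega
      simp [Nat.succ_eq_add_one, this, h]
  rw [hf, if_true]

lemma brd_eq_wrd {M : Type*} [Monoid M] (x y : M) (n : ℕ) :
    brd x y n = wrd x y n := by
  induction n using Nat.twoStepInduction generalizing x y with
  | zero => simp [brd, wrd]
  | one => simp [brd, wrd, List.range_succ]
  | more n ih _ =>
    have h1 : (n + 2) / 2 = n / 2 + 1 := by omega
    have h2 : (n + 2) % 2 = n % 2 := by omega
    rw [wrd_succ, wrd_succ, ← ih x y]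
    rw [brd, brd, h1, h2, pow_succ']
    group

def dec {M : Type*} [Monoid M] (u v : ℕ → M) (n : ℕ) : M :=
  ((List.range n).map fun l => if l % 2 = 0 then u (n - l) else v (n - l)).prod

lemma dec_succ {M : Type*} [Monoid M] (u v : ℕ → M) (n : ℕ) :
    dec u v (n + 1) = u (n + 1) * dec v u n := by
  unfold dec
  rw [List.range_succ_eq_map, List.map_cons, List.prod_cons, List.map_map]
  simp only [if_pos rfl, Nat.sub_zero]
  have hf : ((fun l => if l % 2 = 0 then u (n + 1 - l) else v (n + 1 - l)) ∘ Nat.succ) =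
      fun l => if l % 2 = 0 then v (n - l) else u (n - l) := by
    funext k
    simp only [Function.comp]
    have h3 : n + 1 - (k + 1) = n - k := by omega
    rcases Nat.mod_two_eq_zero_or_one k with h | h
    · have : (k + 1) % 2 = 1 := by omega
      simp [Nat.succ_eq_add_one, this, h, h3]
    · have : (k + 1) % 2 = 0 := by omega
      simp [Nat.succ_eq_add_one, this, h, h3]
  rw [hf, if_true]

lemma push {M : Type*} [Monoid M] (x y : M) (m : ℕ) (u : ℕ → M)
    (H : ∀ k, 1 ≤ k → k ≤ m - 1 →
      u k * (if k % 2 = 1 then y else x) = (if k % 2 = 1 then y else x) * u (k + 1)) :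
    ∀ n j, 1 ≤ j → j + n ≤ m →
      u j * ((List.range n).map fun i => if (j + i) % 2 = 1 then y else x).prod =
      ((List.range n).map fun i => if (j + i) % 2 = 1 then y else x).prod * u (j + n) := by
  intro n
  induction n with
  | zero => intro j _ _; simp
  | succ n ih =>
    intro j hj hjn
    rw [List.range_succ_eq_map, List.map_cons, List.prod_cons, List.map_map]
    simp only [Nat.add_zero]
    have hfe : ((fun i => if (j + i) % 2 = 1 then y else x) ∘ Nat.succ) =
        fun i => if ((j + 1) + i) % 2 = 1 then y else x := by
      funext i
      simp only [Function.comp]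
      have : j + (i + 1) = (j + 1) + i := by omega
      rw [Nat.succ_eq_add_one, this]
    rw [hfe, ← mul_assoc, H j hj (by omega), mul_assoc,
      ih (j + 1) (by omega) (by omega), ← mul_assoc]
    congr 2
    omega

lemma main_lemma {M : Type*} [Monoid M] (m : ℕ) :
    ∀ n, n ≤ m → ∀ (x y : M) (u v : ℕ → M),
      (∀ k, 1 ≤ k → k ≤ m - 1 →
        u k * (if k % 2 = 1 then y else x) = (if k % 2 = 1 then y else x) * u (k + 1)) →
      (∀ k, 1 ≤ k → k ≤ m - 1 →
        v k * (if k % 2 = 1 then x else y) = (if k % 2 = 1 then x else y) * v (k + 1)) →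
      wrd (x * u 1) (y * v 1) n = wrd x y n * dec u v n := by
  intro n
  induction n with
  | zero => intro _ x y u v _ _; simp [wrd, dec]
  | succ n ih =>
    intro hn x y u v Hu Hv
    rw [wrd_succ, wrd_succ, dec_succ, ih (by omega) y x v u Hv Hu]
    have hw : wrd y x n = ((List.range n).map fun i => if (1 + i) % 2 = 1 then y else x).prod := by
      unfold wrd
      have hf : (fun k => if k % 2 = 0 then y else x) =
          fun i : ℕ => if (1 + i) % 2 = 1 then y else x := by
        funext i
        have : (1 + i) % 2 = 1 ↔ i % 2 = 0 := by omega
        rcases Nat.mod_two_eq_zero_or_one i with h | h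
        · simp [h, this.mpr h]
        · have h2 : ¬ (1 + i) % 2 = 1 := by omega
          simp [h, h2]
      rw [hf]
    have hpush := push x y m u Hu n 1 (le_refl 1) (by omega)
    rw [← hw] at hpush
    calc x * u 1 * (wrd y x n * dec v u n)
        = x * (u 1 * wrd y x n) * dec v u n := by group
      _ = x * (wrd y x n * u (1 + n)) * dec v u n := by rw [hpush]
      _ = x * wrd y x n * (u (n + 1) * dec v u n) := by rw [Nat.add_comm 1 n]; group

/-- Rank-2 decoration theorem.  Here `a k` stands for `z_{1,2}^{(k)}` and
`b k` for `z_{2,1}^{(k)}`, for `1 ≤ k ≤ m`. -/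
theorem stmt_19 {M : Type*} [Monoid M] (t₁ t₂ : M) (m : ℕ) (hm : 0 < m)
    (hbr : brd t₁ t₂ m = brd t₂ t₁ m)
    (z₁ z₂ : M) (a b : ℕ → M) (ha1 : a 1 = z₁) (hb1 : b 1 = z₂)
    (ha_odd : ∀ k : ℕ, 1 ≤ k → k ≤ m - 1 → k % 2 = 1 → a k * t₂ = t₂ * a (k + 1))
    (ha_even : ∀ k : ℕ, 1 ≤ k → k ≤ m - 1 → k % 2 = 0 → a k * t₁ = t₁ * a (k + 1))
    (hb_odd : ∀ k : ℕ, 1 ≤ k → k ≤ m - 1 → k % 2 = 1 → b k * t₁ = t₁ * b (k + 1))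
    (hb_even : ∀ k : ℕ, 1 ≤ k → k ≤ m - 1 → k % 2 = 0 → b k * t₂ = t₂ * b (k + 1))
    (hfin :
      ((List.range m).map (fun l => if l % 2 = 0 then a (m - l) else b (m - l))).prod =
      ((List.range m).map (fun l => if l % 2 = 0 then b (m - l) else a (m - l))).prod) :
    brd (t₁ * z₁) (t₂ * z₂) m = brd (t₂ * z₂) (t₁ * z₁) m := by
  have Ha : ∀ k, 1 ≤ k → k ≤ m - 1 →
      a k * (if k % 2 = 1 then t₂ else t₁) = (if k % 2 = 1 then t₂ else t₁) * a (k + 1) := by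
    intro k h1 h2
    rcases Nat.mod_two_eq_zero_or_one k with h | h <;> simp [h]
    · exact ha_even k h1 h2 h
    · exact ha_odd k h1 h2 h
  have Hb : ∀ k, 1 ≤ k → k ≤ m - 1 →
      b k * (if k % 2 = 1 then t₁ else t₂) = (if k % 2 = 1 then t₁ else t₂) * b (k + 1) := by
    intro k h1 h2
    rcases Nat.mod_two_eq_zero_or_one k with h | h <;> simp [h]
    · exact hb_even k h1 h2 h
    · exact hb_odd k h1 h2 h
  have e1 := main_lemma m m (le_refl m) t₁ t₂ a b Ha Hb
  have e2 := main_lemma m m (le_refl m) t₂ t₁ b a Hb Ha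
  rw [ha1, hb1] at e1 e2
  have hw : wrd t₁ t₂ m = wrd t₂ t₁ m := by
    rw [← brd_eq_wrd, ← brd_eq_wrd, hbr]
  rw [brd_eq_wrd, brd_eq_wrd, e1, e2, hw]
  unfold dec
  rw [hfin]
end
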